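/- arXiv:2503.00623 — 4 statements merged into one kernel-verified Lean document; each statement's English description precedes it below -/
import Mathlib

section
/- Consider the double integrator ṗ = v, v̇ = u with u ∈ ℝ³. The function h(p,v) = ⟨p,v⟩ + ‖v‖√(‖p‖² − r²) has Lie derivative along the control direction L_g h(p,v) = p + √(‖p‖² − r²)·v/‖v‖ (for v ≠ 0), and this vector is nonzero whenever ‖p‖ > r and v ≠ 0. -/
open Real InnerProductSpace
open scoped RealInnerProductSpace

noncomputable section

abbrev E3 := EuclideanSpace ℝ (Fin 3)

section Gradient

variable {F : Type*} [NormedAddCommGroup F] [InnerProductSpace ℝ F]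

theorem hasFDerivAt_norm {x : F} (hx : x ≠ 0) :
    HasFDerivAt (‖·‖) (‖x‖⁻¹ • innerSL ℝ x) x := by
  have hsqrt := (hasStrictFDerivAt_norm_sq x).hasFDerivAt.sqrt (by positivity)
  simp only [Real.sqrt_sq (norm_nonneg _)] at hsqrt
  convert hsqrt using 1
  ext y
  simp only [smul_apply, innerSL_apply_apply, smul_eq_mul, nsmul_eq_mul, Nat.cast_ofNat]
  field_simp

theorem hasGradientAt_inner_add_norm_mul [CompleteSpace F] (p : F) (c : ℝ) {v : F}
    (hv : v ≠ 0) :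
    HasGradientAt (fun w : F => ⟪p, w⟫ + ‖w‖ * c) (p + (c / ‖v‖) • v) v := by
  rw [hasGradientAt_iff_hasFDerivAt]
  refine (((innerSL ℝ p).hasFDerivAt).add ((hasFDerivAt_norm hv).mul_const c)).congr_fderiv ?_
  ext w
  simp only [add_apply, smul_apply, innerSL_apply_apply,
    toDual_apply_apply, inner_add_left, real_inner_smul_left, smul_eq_mul]
  ring

end Gradient

theorem add_ne_zero_of_norm_lt {G : Type*} [SeminormedAddCommGroup G] {p q : G}
    (h : ‖q‖ < ‖p‖) : p + q ≠ 0 := by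
  intro hpq
  rw [← neg_eq_of_add_eq_zero_right hpq, norm_neg] at h
  exact lt_irrefl _ h

theorem norm_div_norm_smul_le {G : Type*} [SeminormedAddCommGroup G] [NormedSpace ℝ G]
    {c : ℝ} (hc : 0 ≤ c) (v : G) : ‖(c / ‖v‖) • v‖ ≤ c := by
  rw [norm_smul, Real.norm_of_nonneg (by positivity), div_mul_eq_mul_div]
  exact div_le_of_le_mul₀ (norm_nonneg v) hc (le_refl _)

theorem sqrt_sq_sub_sq_lt {r a : ℝ} (hr : 0 < r) (hra : r < a) : √(a ^ 2 - r ^ 2) < a := by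
  rw [Real.sqrt_lt' (hr.trans hra)]
  nlinarith

theorem stmt4 (p v : E3) (r : ℝ) (hr : 0 < r) (hpr : r < ‖p‖) (hv : v ≠ 0) :
    HasGradientAt (fun w : E3 => ⟪p, w⟫ + ‖w‖ * Real.sqrt (‖p‖ ^ 2 - r ^ 2))
      (p + (Real.sqrt (‖p‖ ^ 2 - r ^ 2) / ‖v‖) • v) v ∧
    p + (Real.sqrt (‖p‖ ^ 2 - r ^ 2) / ‖v‖) • v ≠ 0 :=
  ⟨hasGradientAt_inner_add_norm_mul p _ hv,
    add_ne_zero_of_norm_lt <|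
      (norm_div_norm_smul_le (Real.sqrt_nonneg _) v).trans_lt (sqrt_sq_sub_sq_lt hr hpr)⟩
end
end

section
/- Suppose ‖p‖ > r > 0, v ≠ 0 and h(p,v) = ⟨p,v⟩ + ‖v‖√(‖p‖² − r²) = 0 with ⟨p,v⟩ < 0. Then ⟨p,v⟩² = ‖v‖²(‖p‖² − r²), and the straight-line trajectory p(t) = p + t v attains minimum distance exactly r: inf_{t≥0} ‖p + t v‖ = r. -/
open Real InnerProductSpace
open scoped RealInnerProductSpace

noncomputable section

/-! Completing the square in `t`, the vertex `t* = -⟪p, v⟫ / ‖v‖²` of `t ↦ ‖p + t • v‖²` lies on the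
ray `t ≥ 0` because `⟪p, v⟫ ≤ 0`, and the minimum value `‖p‖² - ⟪p, v⟫² / ‖v‖²` equals `r²` on the
cone boundary `h(p, v) = 0`. -/

section ClosestApproach

variable {F : Type*} [NormedAddCommGroup F] [InnerProductSpace ℝ F]

theorem sq_norm_add_smul (p v : F) (t : ℝ) :
    ‖p + t • v‖ ^ 2 = ‖p‖ ^ 2 + 2 * t * ⟪p, v⟫ + t ^ 2 * ‖v‖ ^ 2 := by
  rw [norm_add_sq_real, inner_smul_right, norm_smul, Real.norm_eq_abs, mul_pow, sq_abs]
  ring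

theorem sq_norm_add_smul_eq_add_sq {v : F} (hv : v ≠ 0) (p : F) (t : ℝ) :
    ‖p + t • v‖ ^ 2 =
      ‖p‖ ^ 2 - ⟪p, v⟫ ^ 2 / ‖v‖ ^ 2 + ‖v‖ ^ 2 * (t + ⟪p, v⟫ / ‖v‖ ^ 2) ^ 2 := by
  have hv2 : ‖v‖ ^ 2 ≠ 0 := by positivity
  rw [sq_norm_add_smul]
  field_simp
  ring

theorem isLeast_norm_add_smul_of_inner_nonpos {p v : F} (hv : v ≠ 0) (hpv : ⟪p, v⟫ ≤ 0) :
    IsLeast {d : ℝ | ∃ t : ℝ, 0 ≤ t ∧ d = ‖p + t • v‖}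
      (√(‖p‖ ^ 2 - ⟪p, v⟫ ^ 2 / ‖v‖ ^ 2)) := by
  have hv2 : 0 < ‖v‖ ^ 2 := by positivity
  refine ⟨⟨-⟪p, v⟫ / ‖v‖ ^ 2, div_nonneg (neg_nonneg.mpr hpv) hv2.le, ?_⟩, ?_⟩
  · rw [← Real.sqrt_sq (norm_nonneg (p + _)), sq_norm_add_smul_eq_add_sq hv, neg_div,
      neg_add_cancel]
    simp
  · rintro d ⟨t, -, rfl⟩
    rw [← Real.sqrt_sq (norm_nonneg (p + t • v)), sq_norm_add_smul_eq_add_sq hv]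
    gcongr
    exact le_add_of_nonneg_right (by positivity)

end ClosestApproach

theorem stmt10_general (p v : E3) (r : ℝ) (hr : 0 < r) (hpr : r < ‖p‖) (hv : v ≠ 0)
    (hh : ⟪p, v⟫ + ‖v‖ * Real.sqrt (‖p‖ ^ 2 - r ^ 2) = 0) :
    ⟪p, v⟫ ^ 2 = ‖v‖ ^ 2 * (‖p‖ ^ 2 - r ^ 2) ∧
      IsLeast {d : ℝ | ∃ t : ℝ, 0 ≤ t ∧ d = ‖p + t • v‖} r := by
  have hinner : ⟪p, v⟫ = -(‖v‖ * √(‖p‖ ^ 2 - r ^ 2)) := eq_neg_of_add_eq_zero_left hh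
  have hsq : ⟪p, v⟫ ^ 2 = ‖v‖ ^ 2 * (‖p‖ ^ 2 - r ^ 2) := by
    rw [hinner, neg_sq, mul_pow, Real.sq_sqrt (by nlinarith)]
  have hmin : ‖p‖ ^ 2 - ⟪p, v⟫ ^ 2 / ‖v‖ ^ 2 = r ^ 2 := by
    have : ‖v‖ ^ 2 ≠ 0 := by positivity
    rw [hsq, mul_div_cancel_left₀ _ this]
    ring
  have hpv : ⟪p, v⟫ ≤ 0 := by
    rw [hinner, neg_nonpos]
    positivity
  refine ⟨hsq, ?_⟩
  simpa [hmin, Real.sqrt_sq hr.le] using isLeast_norm_add_smul_of_inner_nonpos hv hpv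

theorem stmt10 (p v : E3) (r : ℝ) (hr : 0 < r) (hpr : r < ‖p‖) (hv : v ≠ 0)
    (hh : ⟪p, v⟫ + ‖v‖ * Real.sqrt (‖p‖ ^ 2 - r ^ 2) = 0) (hneg : ⟪p, v⟫ < 0) :
    ⟪p, v⟫ ^ 2 = ‖v‖ ^ 2 * (‖p‖ ^ 2 - r ^ 2) ∧
      IsLeast {d : ℝ | ∃ t : ℝ, 0 ≤ t ∧ d = ‖p + t • v‖} r :=
  stmt10_general p v r hr hpr hv hh
end
end

section
/- Suppose ‖p‖ > r > 0, v ≠ 0 and h(p,v) = ⟨p,v⟩ + ‖v‖√(‖p‖² − r²) < 0. Then the straight-line relative trajectory enters the safety ball: there exists t ≥ 0 such that ‖p + t v‖ < r. -/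
open Real InnerProductSpace
open scoped RealInnerProductSpace

noncomputable section

/-!
The point of the line `t ↦ p + t • v` closest to the origin is at `t₀ = -⟪p, v⟫ / ‖v‖²`, where
`‖p + t₀ • v‖² = ‖p‖² - ⟪p, v⟫² / ‖v‖²`. If `h(p, v) < 0`, then `⟪p, v⟫ < 0`, so `t₀ > 0`, and
squaring `-⟪p, v⟫ > ‖v‖ √(‖p‖² - r²) ≥ 0` gives `⟪p, v⟫² > ‖v‖² (‖p‖² - r²)`, i.e. the minimal
squared distance is below `r²`.
-/

section CollisionCone

variable {F : Type*} [NormedAddCommGroup F] [InnerProductSpace ℝ F]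

theorem norm_add_smul_sq_eq_of_closest (p v : F) (hv : v ≠ 0) :
    ‖p + (-⟪p, v⟫ / ‖v‖ ^ 2) • v‖ ^ 2 = ‖p‖ ^ 2 - ⟪p, v⟫ ^ 2 / ‖v‖ ^ 2 := by
  have hv2 : ‖v‖ ^ 2 ≠ 0 := by positivity
  rw [norm_add_sq_real, real_inner_smul_right, norm_smul, mul_pow, Real.norm_eq_abs, sq_abs]
  field_simp
  ring

theorem inner_neg_and_sq_lt_inner_sq_of_collisionCone {p v : F} {r : ℝ} (hpr : r ^ 2 ≤ ‖p‖ ^ 2)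
    (hh : ⟪p, v⟫ + ‖v‖ * √(‖p‖ ^ 2 - r ^ 2) < 0) :
    ⟪p, v⟫ < 0 ∧ ‖v‖ ^ 2 * (‖p‖ ^ 2 - r ^ 2) < ⟪p, v⟫ ^ 2 := by
  have hroot : 0 ≤ ‖v‖ * √(‖p‖ ^ 2 - r ^ 2) := by positivity
  refine ⟨by linarith, ?_⟩
  calc ‖v‖ ^ 2 * (‖p‖ ^ 2 - r ^ 2) = (‖v‖ * √(‖p‖ ^ 2 - r ^ 2)) ^ 2 := by
        rw [mul_pow, Real.sq_sqrt (sub_nonneg.mpr hpr)]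
    _ < ⟪p, v⟫ ^ 2 := by nlinarith

theorem exists_nonneg_norm_add_smul_lt_of_collisionCone {p v : F} {r : ℝ} (hr : 0 ≤ r)
    (hpr : r ≤ ‖p‖) (hh : ⟪p, v⟫ + ‖v‖ * √(‖p‖ ^ 2 - r ^ 2) < 0) :
    ∃ t : ℝ, 0 ≤ t ∧ ‖p + t • v‖ < r := by
  obtain ⟨hpv, hgap⟩ := inner_neg_and_sq_lt_inner_sq_of_collisionCone (pow_le_pow_left₀ hr hpr 2) hh
  have hv : v ≠ 0 := by
    rintro rfl
    simp at hpv
  have hv2 : 0 < ‖v‖ ^ 2 := by positivity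
  refine ⟨-⟪p, v⟫ / ‖v‖ ^ 2, div_nonneg (neg_nonneg.mpr hpv.le) hv2.le, ?_⟩
  refine lt_of_pow_lt_pow_left₀ 2 hr ?_
  rw [norm_add_smul_sq_eq_of_closest p v hv, sub_lt_comm, lt_div_iff₀ hv2]
  linarith

end CollisionCone

theorem stmt11_general (p v : E3) (r : ℝ) (hr : 0 < r) (hpr : r < ‖p‖)
    (hh : ⟪p, v⟫ + ‖v‖ * Real.sqrt (‖p‖ ^ 2 - r ^ 2) < 0) :
    ∃ t : ℝ, 0 ≤ t ∧ ‖p + t • v‖ < r :=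
  exists_nonneg_norm_add_smul_lt_of_collisionCone hr.le hpr.le hh

theorem stmt11 (p v : E3) (r : ℝ) (hr : 0 < r) (hpr : r < ‖p‖) (hv : v ≠ 0)
    (hh : ⟪p, v⟫ + ‖v‖ * Real.sqrt (‖p‖ ^ 2 - r ^ 2) < 0) :
    ∃ t : ℝ, 0 ≤ t ∧ ‖p + t • v‖ < r :=
  stmt11_general p v r hr hpr hh
end
end

section
/- Conversely, if ‖p‖ > r > 0, v ≠ 0 and h(p,v) = ⟨p,v⟩ + ‖v‖√(‖p‖² − r²) ≥ 0, then ‖p + t v‖ ≥ r for all t ≥ 0. -/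
/-!
With `s := √(‖p‖² - r²)`, completing the square gives
`‖p + t • v‖² = r² + (s - t‖v‖)² + 2t (⟪p, v⟫ + ‖v‖ s)`,
and for `t ≥ 0` the last two terms are nonnegative when `h(p, v) ≥ 0`.
-/

open Real InnerProductSpace
open scoped RealInnerProductSpace

noncomputable section

section

variable {E : Type*} [NormedAddCommGroup E] [InnerProductSpace ℝ E]

theorem norm_add_smul_sq_eq (p v : E) (t s : ℝ) :
    ‖p + t • v‖ ^ 2 =
      (‖p‖ ^ 2 - s ^ 2) + (s - t * ‖v‖) ^ 2 + 2 * t * (⟪p, v⟫ + ‖v‖ * s) := by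
  rw [norm_add_sq_real, inner_smul_right, norm_smul, Real.norm_eq_abs, mul_pow, sq_abs]
  ring

theorem le_norm_add_smul_of_nonneg {p v : E} {r t : ℝ} (hr : 0 ≤ r) (hpr : r ≤ ‖p‖)
    (hh : 0 ≤ ⟪p, v⟫ + ‖v‖ * √(‖p‖ ^ 2 - r ^ 2)) (ht : 0 ≤ t) : r ≤ ‖p + t • v‖ := by
  have hs : √(‖p‖ ^ 2 - r ^ 2) ^ 2 = ‖p‖ ^ 2 - r ^ 2 :=
    sq_sqrt (sub_nonneg.mpr (pow_le_pow_left₀ hr hpr 2))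
  have hsq : r ^ 2 ≤ ‖p + t • v‖ ^ 2 := by
    rw [norm_add_smul_sq_eq p v t (√(‖p‖ ^ 2 - r ^ 2)), hs]
    linarith [sq_nonneg (√(‖p‖ ^ 2 - r ^ 2) - t * ‖v‖), mul_nonneg ht hh]
  exact (pow_le_pow_iff_left₀ hr (norm_nonneg _) two_ne_zero).mp hsq

end

theorem stmt12_general (p v : E3) (r : ℝ) (hr : 0 < r) (hpr : r < ‖p‖)
    (hh : 0 ≤ ⟪p, v⟫ + ‖v‖ * Real.sqrt (‖p‖ ^ 2 - r ^ 2)) :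
    ∀ t : ℝ, 0 ≤ t → r ≤ ‖p + t • v‖ :=
  fun _ ht => le_norm_add_smul_of_nonneg hr.le hpr.le hh ht

theorem stmt12 (p v : E3) (r : ℝ) (hr : 0 < r) (hpr : r < ‖p‖) (hv : v ≠ 0)
    (hh : 0 ≤ ⟪p, v⟫ + ‖v‖ * Real.sqrt (‖p‖ ^ 2 - r ^ 2)) :
    ∀ t : ℝ, 0 ≤ t → r ≤ ‖p + t • v‖ :=
  stmt12_general p v r hr hpr hh
end
end
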